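/- Let C = (1, c₂, 2c₂, c₄, c₂+c₄, 2c₄) with c₄ ≥ 3c₂ − 1 and c₄ ≠ 3c₂, and let ℓ = ⌈(c₂+c₄)/(2c₂)⌉. Assume grd_C(ℓ·2c₂) = 2ℓc₂ − (c₂+c₄) + 1 − ⌊(2ℓc₂ − (c₂+c₄))/c₂⌋·(c₂−1) and grd_C(ℓ·2c₂) ≤ ℓ. Then C is canonical and the subsystem (1, c₂, 2c₂, c₄, c₂+c₄) is noncanonical. -/

import Mathlib

open Finset

/-- `x` is a representation of value `v` in the coin system `c 1, …, c n`. -/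
def IsRepr (n : ℕ) (c : ℕ → ℕ) (v : ℕ) (x : ℕ → ℕ) : Prop :=
  ∑ i ∈ Finset.Icc 1 n, c i * x i = v

/-- Minimum number of coins over all representations of `v`. -/
noncomputable def opt (n : ℕ) (c : ℕ → ℕ) (v : ℕ) : ℕ :=
  sInf {k | ∃ x : ℕ → ℕ, IsRepr n c v x ∧ ∑ i ∈ Finset.Icc 1 n, x i = k}

/-- Number of coins used by the greedy algorithm to pay `v`. -/
def grd (n : ℕ) (c : ℕ → ℕ) (v : ℕ) : ℕ :=
  if hv : v = 0 then 0
  else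
    let m := ((Finset.Icc 1 n).filter (fun i => c i ≤ v)).sup c
    if hm : 0 < m then grd n c (v - m) + 1 else 0
termination_by v
decreasing_by omega

/-- The system is canonical: greedy is optimal for every positive value. -/
def Canonical (n : ℕ) (c : ℕ → ℕ) : Prop :=
  ∀ v, 0 < v → opt n c v = grd n c v

/-- `w` is a counterexample to the system. -/
def IsCex (n : ℕ) (c : ℕ → ℕ) (w : ℕ) : Prop :=
  0 < w ∧ opt n c w < grd n c w

/-- `w` is the minimum counterexample to the system. -/
def MinCex (n : ℕ) (c : ℕ → ℕ) (w : ℕ) : Prop :=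
  IsCex n c w ∧ ∀ u, IsCex n c u → w ≤ u

/-- A (currency) system: first coin is `1` and coins strictly increase. -/
def IsSystem (n : ℕ) (c : ℕ → ℕ) : Prop :=
  c 1 = 1 ∧ StrictMonoOn c (Set.Icc 1 n)

/-!
Greedy is optimal as soon as its coin count `G` satisfies `G (v + c) ≤ G v + 1` for every
coin `c`: peel one coin off an optimal representation and induct. For the coins
`1, a, 2a, b, a + b, 2b` the greedy count is `G v = v / 2b + grd₅ a b (v % 2b)`, where `grd₅`
is explicit in terms of the greedy count `grd₃` for `1, a, 2a`. So the inequality becomes, for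
each coin, an arithmetic inequality on `grd₅` inside one period, plus a wrap-around inequality
for when `v + c` crosses a multiple of `2b`. Those that do not hold for every such system
follow from the hypothesis that greedy pays `2aℓ` with at most `ℓ` coins. Without the coin
`2b` the system is not canonical: `2b = b + b`, while greedy pays `a + b` and then needs at
least two coins for `b - a`.
-/

section Greedy

variable {n : ℕ} {c : ℕ → ℕ}

lemma grd_zero : grd n c 0 = 0 := by
  rw [grd]; simp

lemma grd_eq_grd_sub_add_one {v j : ℕ} (hj : j ∈ Icc 1 n) (hjv : c j ≤ v)
    (hmax : ∀ i ∈ Icc 1 n, c i ≤ v → c i ≤ c j) (hpos : 0 < c j) :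
    grd n c v = grd n c (v - c j) + 1 := by
  have hsup : ((Icc 1 n).filter (fun i => c i ≤ v)).sup c = c j :=
    le_antisymm (Finset.sup_le fun i hi => hmax i (mem_filter.mp hi).1 (mem_filter.mp hi).2)
      (le_sup (mem_filter.mpr ⟨hj, hjv⟩))
  rw [grd, dif_neg (by omega)]
  simp only [hsup, dif_pos hpos]

lemma exists_grd_eq_grd_sub_add_one (hn : 1 ≤ n) (hc1 : c 1 = 1) {v : ℕ} (hv : 0 < v) :
    ∃ j ∈ Icc 1 n, c j ≤ v ∧ 0 < c j ∧ grd n c v = grd n c (v - c j) + 1 := by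
  have h1 : 1 ∈ (Icc 1 n).filter (fun i => c i ≤ v) := mem_filter.mpr ⟨by simp [hn], by omega⟩
  obtain ⟨j, hj, hjsup⟩ := exists_mem_eq_sup _ ⟨1, h1⟩ c
  have hpos : 0 < c j := by
    rw [← hjsup]; exact lt_of_lt_of_le (by omega) (le_sup (f := c) h1)
  rw [mem_filter] at hj
  refine ⟨j, hj.1, hj.2, hpos, grd_eq_grd_sub_add_one hj.1 hj.2 (fun i hi hiv => ?_) hpos⟩
  exact hjsup ▸ le_sup (mem_filter.mpr ⟨hi, hiv⟩)

lemma grd_pos (hn : 1 ≤ n) (hc1 : c 1 = 1) {v : ℕ} (hv : 0 < v) : 0 < grd n c v := by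
  obtain ⟨j, -, -, -, hgrd⟩ := exists_grd_eq_grd_sub_add_one hn hc1 hv
  omega

lemma grd_add_top (hn : 1 ≤ n) (hmax : ∀ i ∈ Icc 1 n, c i ≤ c n) (hpos : 0 < c n) (v : ℕ) :
    grd n c (v + c n) = grd n c v + 1 := by
  rw [grd_eq_grd_sub_add_one (by simp [hn]) (by omega) (fun i hi _ => hmax i hi) hpos,
    Nat.add_sub_cancel]

lemma grd_add_mul_top (hn : 1 ≤ n) (hmax : ∀ i ∈ Icc 1 n, c i ≤ c n) (hpos : 0 < c n)
    (v k : ℕ) : grd n c (v + c n * k) = grd n c v + k := by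
  induction k with
  | zero => simp
  | succ k ih => rw [mul_add_one, ← add_assoc, grd_add_top hn hmax hpos, ih, add_assoc]

lemma grd_eq_div_add_grd_mod (hn : 1 ≤ n) (hmax : ∀ i ∈ Icc 1 n, c i ≤ c n) (hpos : 0 < c n)
    (v : ℕ) : grd n c v = v / c n + grd n c (v % c n) := by
  conv_lhs => rw [← Nat.mod_add_div v (c n)]
  rw [grd_add_mul_top hn hmax hpos, add_comm]

lemma grd_one (hc1 : c 1 = 1) (v : ℕ) : grd 1 c v = v := by
  rw [grd_eq_div_add_grd_mod le_rfl (by simp [hc1]) (by omega), hc1, Nat.mod_one, grd_zero,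
    Nat.div_one, add_zero]

lemma grd_succ_of_lt {v : ℕ} (hv : v < c (n + 1)) : grd (n + 1) c v = grd n c v := by
  induction v using Nat.strong_induction_on with
  | _ v ih =>
    have hfilter : (Icc 1 (n + 1)).filter (fun i => c i ≤ v) =
        (Icc 1 n).filter (fun i => c i ≤ v) := by
      ext i
      simp only [mem_filter, mem_Icc]
      rcases eq_or_ne i (n + 1) with rfl | hi <;> omega
    rw [grd, grd, hfilter]
    dsimp only
    split_ifs with hv0 hm
    · rfl
    · rw [ih _ (by omega) (by omega)]
    · rfl

end Greedy

section Optimal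

variable {n : ℕ} {c : ℕ → ℕ}

lemma sum_mul_add_single (w x : ℕ → ℕ) {j : ℕ} (hj : j ∈ Icc 1 n) :
    ∑ i ∈ Icc 1 n, w i * (x + Pi.single j 1 : ℕ → ℕ) i = ∑ i ∈ Icc 1 n, w i * x i + w j := by
  simp [mul_add, sum_add_distrib, Pi.single_apply, hj]

lemma sum_add_single (x : ℕ → ℕ) {j : ℕ} (hj : j ∈ Icc 1 n) :
    ∑ i ∈ Icc 1 n, (x + Pi.single j 1 : ℕ → ℕ) i = ∑ i ∈ Icc 1 n, x i + 1 := by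
  simp [sum_add_distrib, hj]

lemma opt_le {v : ℕ} {x : ℕ → ℕ} (hx : IsRepr n c v x) : opt n c v ≤ ∑ i ∈ Icc 1 n, x i :=
  Nat.sInf_le ⟨x, hx, rfl⟩

lemma exists_isRepr_sum_eq_opt (hn : 1 ≤ n) (hc1 : c 1 = 1) (v : ℕ) :
    ∃ x, IsRepr n c v x ∧ ∑ i ∈ Icc 1 n, x i = opt n c v := by
  refine Nat.sInf_mem (s := {k | ∃ x, IsRepr n c v x ∧ ∑ i ∈ Icc 1 n, x i = k})
    ⟨_, Pi.single 1 v, ?_, rfl⟩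
  simp [IsRepr, Pi.single_apply, hn, hc1]

lemma opt_zero : opt n c 0 = 0 :=
  Nat.eq_zero_of_le_zero (by simpa using opt_le (n := n) (c := c) (x := 0) (by simp [IsRepr]))

lemma opt_add_le (hn : 1 ≤ n) (hc1 : c 1 = 1) {j : ℕ} (hj : j ∈ Icc 1 n) (v : ℕ) :
    opt n c (v + c j) ≤ opt n c v + 1 := by
  obtain ⟨x, hx, hsum⟩ := exists_isRepr_sum_eq_opt hn hc1 v
  have h := opt_le (c := c) (v := v + c j) (x := x + Pi.single j 1)
    (by rw [IsRepr, sum_mul_add_single c x hj, hx])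
  rwa [sum_add_single x hj, hsum] at h

lemma opt_mul_le (hn : 1 ≤ n) (hc1 : c 1 = 1) {j : ℕ} (hj : j ∈ Icc 1 n) (k : ℕ) :
    opt n c (c j * k) ≤ k := by
  induction k with
  | zero => simp [opt_zero]
  | succ k ih => rw [mul_add_one]; linarith [opt_add_le hn hc1 hj (c j * k)]

lemma exists_opt_sub_add_one_le (hn : 1 ≤ n) (hc1 : c 1 = 1) {v : ℕ} (hv : 0 < v) :
    ∃ j ∈ Icc 1 n, c j ≤ v ∧ opt n c (v - c j) + 1 ≤ opt n c v := by
  obtain ⟨x, hx, hsum⟩ := exists_isRepr_sum_eq_opt hn hc1 v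
  obtain ⟨j, hj, hxj⟩ : ∃ j ∈ Icc 1 n, x j ≠ 0 := by
    by_contra! h
    rw [IsRepr, sum_eq_zero fun i hi => by rw [h i hi, mul_zero]] at hx
    omega
  set y := x - Pi.single j 1
  have hxy : x = y + Pi.single j 1 := by
    ext i
    by_cases hi : i = j
    · subst hi
      simp only [y, Pi.sub_apply, Pi.add_apply, Pi.single_eq_same]
      omega
    · simp [y, hi]
  rw [IsRepr, hxy, sum_mul_add_single c y hj] at hx
  rw [hxy, sum_add_single y hj] at hsum
  refine ⟨j, hj, by omega, ?_⟩
  have := opt_le (n := n) (c := c) (v := v - c j) (x := y) (by rw [IsRepr]; omega)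
  omega

lemma opt_le_grd (hn : 1 ≤ n) (hc1 : c 1 = 1) (v : ℕ) : opt n c v ≤ grd n c v := by
  induction v using Nat.strong_induction_on with
  | _ v ih =>
    rcases Nat.eq_zero_or_pos v with rfl | hv
    · simp [opt_zero]
    obtain ⟨j, hj, hjv, hpos, hgrd⟩ := exists_grd_eq_grd_sub_add_one hn hc1 hv
    have := opt_add_le hn hc1 hj (v - c j)
    rw [Nat.sub_add_cancel hjv] at this
    have := ih (v - c j) (by omega)
    omega

lemma grd_le_opt_of_grd_add_le (hn : 1 ≤ n) (hc1 : c 1 = 1) (hpos : ∀ i ∈ Icc 1 n, 0 < c i)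
    (hex : ∀ v, ∀ j ∈ Icc 1 n, grd n c (v + c j) ≤ grd n c v + 1) (v : ℕ) :
    grd n c v ≤ opt n c v := by
  induction v using Nat.strong_induction_on with
  | _ v ih =>
    rcases Nat.eq_zero_or_pos v with rfl | hv
    · simp [grd_zero]
    obtain ⟨j, hj, hjv, hopt⟩ := exists_opt_sub_add_one_le hn hc1 hv
    have := hex (v - c j) j hj
    rw [Nat.sub_add_cancel hjv] at this
    have := ih (v - c j) (by have := hpos j hj; omega)
    omega

lemma canonical_of_grd_add_le (hn : 1 ≤ n) (hc1 : c 1 = 1) (hpos : ∀ i ∈ Icc 1 n, 0 < c i)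
    (hex : ∀ v, ∀ j ∈ Icc 1 n, grd n c (v + c j) ≤ grd n c v + 1) : Canonical n c :=
  fun v _ => le_antisymm (opt_le_grd hn hc1 v) (grd_le_opt_of_grd_add_le hn hc1 hpos hex v)

end Optimal

def grd₃ (a s : ℕ) : ℕ := s / (2 * a) + s % (2 * a) / a + s % a

section ThreeCoins

variable {a : ℕ} (ha : 0 < a)
include ha

lemma grd₃_add_two_mul (s : ℕ) : grd₃ a (s + 2 * a) = grd₃ a s + 1 := by
  have h : s + 2 * a = s + a * 2 := by ring
  rw [grd₃, Nat.add_div_right _ (by omega), Nat.add_mod_right, h, Nat.add_mul_mod_self_left, grd₃]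
  ring

lemma grd₃_add_mul (s k : ℕ) : grd₃ a (s + 2 * a * k) = grd₃ a s + k := by
  induction k with
  | zero => simp
  | succ k ih => rw [mul_add_one, ← add_assoc, grd₃_add_two_mul ha, ih, add_assoc]

lemma grd₃_of_lt {s : ℕ} (hs : s < a) : grd₃ a s = s := by
  rw [grd₃, Nat.div_eq_of_lt (by omega), Nat.mod_eq_of_lt (by omega), Nat.div_eq_of_lt hs,
    Nat.mod_eq_of_lt hs, zero_add, zero_add]

lemma grd₃_of_le_of_lt {s : ℕ} (h1 : a ≤ s) (h2 : s < 2 * a) : grd₃ a s = s - a + 1 := by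
  obtain ⟨t, rfl⟩ : ∃ t, s = t + a * 1 := ⟨s - a, by omega⟩
  rw [grd₃, Nat.div_eq_of_lt h2, Nat.mod_eq_of_lt h2, Nat.add_mul_div_left _ _ ha,
    Nat.add_mul_mod_self_left, Nat.div_eq_of_lt (by omega), Nat.mod_eq_of_lt (by omega)]
  omega

lemma exists_eq_add_two_mul_mul (s : ℕ) : ∃ x k, x < 2 * a ∧ s = x + 2 * a * k :=
  ⟨_, _, Nat.mod_lt _ (by omega), (Nat.mod_add_div s (2 * a)).symm⟩

lemma grd₃_le_self (s : ℕ) : grd₃ a s ≤ s := by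
  obtain ⟨x, k, hx, rfl⟩ := exists_eq_add_two_mul_mul ha s
  have : k ≤ 2 * a * k := Nat.le_mul_of_pos_left k (by omega)
  rw [grd₃_add_mul ha]
  rcases Nat.lt_or_ge x a with h | h
  · rw [grd₃_of_lt ha h]; omega
  · rw [grd₃_of_le_of_lt ha h hx]; omega

lemma grd₃_succ_le (s : ℕ) : grd₃ a (s + 1) ≤ grd₃ a s + 1 := by
  obtain ⟨x, k, hx, rfl⟩ := exists_eq_add_two_mul_mul ha s
  rcases Nat.lt_or_ge (x + 1) (2 * a) with h | h
  · rw [add_right_comm, grd₃_add_mul ha, grd₃_add_mul ha]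
    rcases Nat.lt_or_ge x a with h' | h'
    · rcases Nat.lt_or_ge (x + 1) a with h'' | h''
      · rw [grd₃_of_lt ha h', grd₃_of_lt ha h'']; omega
      · rw [grd₃_of_lt ha h', grd₃_of_le_of_lt ha h'' h]; omega
    · rw [grd₃_of_le_of_lt ha h' hx, grd₃_of_le_of_lt ha (by omega) h]; omega
  · rw [show x + 2 * a * k + 1 = 0 + 2 * a * (k + 1) by rw [mul_add_one]; omega,
      grd₃_add_mul ha, grd₃_add_mul ha, grd₃_of_lt ha ha, grd₃_of_le_of_lt ha (by omega) hx]
    omega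

lemma grd₃_add_le (s t : ℕ) : grd₃ a (s + t) ≤ grd₃ a s + t := by
  induction t with
  | zero => simp
  | succ t ih => rw [← add_assoc]; linarith [grd₃_succ_le ha (s + t)]

lemma grd₃_le_grd₃_add_and_grd₃_add_le (s : ℕ) :
    grd₃ a s ≤ grd₃ a (s + a) ∧ grd₃ a (s + a) ≤ grd₃ a s + 1 := by
  obtain ⟨x, k, hx, rfl⟩ := exists_eq_add_two_mul_mul ha s
  rcases Nat.lt_or_ge x a with h | h
  · rw [add_right_comm, grd₃_add_mul ha, grd₃_add_mul ha, grd₃_of_lt ha h,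
      grd₃_of_le_of_lt ha (by omega) (by omega)]
    omega
  · rw [show x + 2 * a * k + a = (x - a) + 2 * a * (k + 1) by rw [mul_add_one]; omega,
      grd₃_add_mul ha, grd₃_add_mul ha, grd₃_of_le_of_lt ha h hx, grd₃_of_lt ha (by omega)]
    omega

end ThreeCoins

def grd₅ (a b r : ℕ) : ℕ :=
  if a + b ≤ r then grd₃ a (r - (a + b)) + 1 else if b ≤ r then r - b + 1 else grd₃ a r

section FiveCoins

variable {a b : ℕ}

lemma grd₅_of_add_le {r : ℕ} (h : a + b ≤ r) : grd₅ a b r = grd₃ a (r - (a + b)) + 1 := by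
  rw [grd₅, if_pos h]

lemma grd₅_of_le_of_lt {r : ℕ} (h1 : b ≤ r) (h2 : r < a + b) : grd₅ a b r = r - b + 1 := by
  rw [grd₅, if_neg (by omega), if_pos h1]

lemma grd₅_of_lt {r : ℕ} (h : r < b) : grd₅ a b r = grd₃ a r := by
  rw [grd₅, if_neg (by omega), if_neg (by omega)]

lemma grd₅_le_grd₅_sub_a_add_b {r : ℕ} (h1 : a + b ≤ r) (h2 : r < 2 * b) :
    grd₅ a b r ≤ grd₅ a b (r - (a + b)) + 1 := by
  rw [grd₅_of_add_le h1, grd₅_of_lt (by omega)]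

variable (ha : 0 < a)
include ha

lemma grd₅_le_grd₅_sub_one {r : ℕ} (h1 : 1 ≤ r) :
    grd₅ a b r ≤ grd₅ a b (r - 1) + 1 := by
  have hsucc := grd₃_succ_le ha
  rcases Nat.lt_or_ge r b with hr | hr
  · rw [grd₅_of_lt hr, grd₅_of_lt (by omega)]
    simpa [Nat.sub_add_cancel h1] using hsucc (r - 1)
  rcases Nat.lt_or_ge r (a + b) with hr' | hr'
  · rw [grd₅_of_le_of_lt hr hr']
    rcases Nat.lt_or_ge (r - 1) b with hr'' | hr''
    · rw [grd₅_of_lt hr'']; omega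
    · rw [grd₅_of_le_of_lt hr'' (by omega)]; omega
  · rw [grd₅_of_add_le hr']
    rcases Nat.lt_or_ge (r - 1) (a + b) with hr'' | hr''
    · rw [grd₅_of_le_of_lt (by omega) hr'', show r - (a + b) = 0 by omega, grd₃_of_lt ha ha]
      omega
    · rw [grd₅_of_add_le hr'']
      have := hsucc (r - 1 - (a + b))
      rw [show r - 1 - (a + b) + 1 = r - (a + b) by omega] at this
      omega

lemma grd₅_le_grd₅_sub_b {r : ℕ} (h1 : b ≤ r) (h2 : r < 2 * b) :
    grd₅ a b r ≤ grd₅ a b (r - b) + 1 := by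
  rcases Nat.lt_or_ge r (a + b) with hc | hc
  · rw [grd₅_of_le_of_lt h1 hc, grd₅_of_lt (by omega), grd₃_of_lt ha (by omega)]
  · rw [grd₅_of_add_le hc, grd₅_of_lt (by omega)]
    have := (grd₃_le_grd₃_add_and_grd₃_add_le ha (r - (a + b))).1
    rw [show r - (a + b) + a = r - b by omega] at this
    omega

lemma grd₅_le_grd₅_wrap_b {r : ℕ} (h1 : r < b) : grd₅ a b r ≤ grd₅ a b (b + r) := by
  rw [grd₅_of_lt h1]
  rcases Nat.lt_or_ge r a with hc | hc
  · rw [grd₅_of_le_of_lt (by omega) (by omega), grd₃_of_lt ha hc]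
    omega
  · rw [grd₅_of_add_le (by omega), show b + r - (a + b) = r - a by omega]
    have := (grd₃_le_grd₃_add_and_grd₃_add_le ha (r - a)).2
    rw [Nat.sub_add_cancel hc] at this
    exact this

end FiveCoins

section Excess

/- `ℓ = ⌈(a + b) / 2a⌉` and `s₀ = 2aℓ - (a + b)`: greedy pays `2aℓ` as `(a + b) + s₀`, so `hH`
says that it does so with at most `ℓ` coins. -/
variable {a b ℓ s₀ : ℕ} (ha : 0 < a) (hb : 3 * a - 1 ≤ b)
  (hsum : a + b + s₀ = 2 * a * ℓ) (hs₀ : s₀ < 2 * a) (hH : grd₃ a s₀ + 1 ≤ ℓ)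
include ha hsum hs₀ hH

include hb in
lemma le_grd₃_sub_two_mul_add {u : ℕ} (hu : u < a) : u ≤ grd₃ a (b - 2 * a + u) := by
  have hℓ : 2 ≤ ℓ := by
    by_contra! h
    interval_cases ℓ <;> omega
  obtain ⟨m, rfl⟩ : ∃ m, ℓ = m + 2 := ⟨ℓ - 2, by omega⟩
  rw [show 2 * a * (m + 2) = 2 * a * m + 4 * a by ring] at hsum
  rcases Nat.lt_or_ge s₀ a with hs | hs
  · rw [grd₃_of_lt ha hs] at hH
    rw [show b - 2 * a + u = (u + a - s₀) + 2 * a * m by omega, grd₃_add_mul ha]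
    rcases Nat.lt_or_ge u s₀ with hus | hus
    · rw [grd₃_of_lt ha (by omega)]; omega
    · rw [grd₃_of_le_of_lt ha (by omega) (by omega)]; omega
  · rw [grd₃_of_le_of_lt ha hs hs₀] at hH
    rcases Nat.lt_or_ge u (s₀ - a) with hus | hus
    · obtain ⟨n, rfl⟩ : ∃ n, m = n + 1 := ⟨m - 1, by omega⟩
      rw [show 2 * a * (n + 1) = 2 * a * n + 2 * a by ring] at hsum
      rw [show b - 2 * a + u = (3 * a - s₀ + u) + 2 * a * n by omega, grd₃_add_mul ha,
        grd₃_of_le_of_lt ha (by omega) (by omega)]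
      omega
    · rw [show b - 2 * a + u = (u + a - s₀) + 2 * a * m by omega, grd₃_add_mul ha,
        grd₃_of_lt ha (by omega)]
      omega

lemma grd₃_le_grd₃_sub_three_mul_add (hb3 : 3 * a < b) {r : ℕ} (hr : r < 2 * a) :
    grd₃ a r ≤ grd₃ a (b - 3 * a + r) + 1 := by
  have hℓ : 3 ≤ ℓ := by
    by_contra! h
    interval_cases ℓ <;> omega
  obtain ⟨m, rfl⟩ : ∃ m, ℓ = m + 3 := ⟨ℓ - 3, by omega⟩
  rw [show 2 * a * (m + 3) = 2 * a * m + 6 * a by ring] at hsum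
  rcases Nat.lt_or_ge s₀ a with hs | hs
  · rw [grd₃_of_lt ha hs] at hH
    rcases Nat.lt_or_ge r s₀ with hrs | hrs
    · rw [show b - 3 * a + r = (2 * a - s₀ + r) + 2 * a * m by omega, grd₃_add_mul ha,
        grd₃_of_lt ha (by omega), grd₃_of_le_of_lt ha (by omega) (by omega)]
      omega
    · rw [show b - 3 * a + r = (r - s₀) + 2 * a * (m + 1) by rw [mul_add_one]; omega,
        grd₃_add_mul ha]
      have := grd₃_add_le ha (r - s₀) s₀
      rw [Nat.sub_add_cancel hrs] at this
      omega
  · rw [grd₃_of_le_of_lt ha hs hs₀] at hH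
    rcases Nat.lt_or_ge r a with hra | hra
    · rw [show b - 3 * a + r = (2 * a - s₀ + r) + 2 * a * m by omega, grd₃_add_mul ha,
        grd₃_of_lt ha hra]
      rcases Nat.lt_or_ge r (s₀ - a) with hrs | hrs
      · rw [grd₃_of_lt ha (by omega)]; omega
      · rw [grd₃_of_le_of_lt ha (by omega) (by omega)]; omega
    · rw [grd₃_of_le_of_lt ha hra hr]
      rcases Nat.lt_or_ge r s₀ with hrs | hrs
      · rw [show b - 3 * a + r = (2 * a - s₀ + r) + 2 * a * m by omega, grd₃_add_mul ha,
          grd₃_of_le_of_lt ha (by omega) (by omega)]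
        omega
      · rw [show b - 3 * a + r = (r - s₀) + 2 * a * (m + 1) by rw [mul_add_one]; omega,
          grd₃_add_mul ha, grd₃_of_lt ha (by omega)]
        omega

include hb

lemma grd₅_le_grd₅_sub_a {r : ℕ} (h1 : a ≤ r) :
    grd₅ a b r ≤ grd₅ a b (r - a) + 1 := by
  rcases Nat.lt_or_ge r b with hc | hc
  · rw [grd₅_of_lt hc, grd₅_of_lt (by omega)]
    have := (grd₃_le_grd₃_add_and_grd₃_add_le ha (r - a)).2
    rwa [Nat.sub_add_cancel h1] at this
  rcases Nat.lt_or_ge r (a + b) with hd | hd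
  · rw [grd₅_of_le_of_lt hc hd, grd₅_of_lt (by omega)]
    have hP := le_grd₃_sub_two_mul_add ha hb hsum hs₀ hH (u := r - b) (by omega)
    have hA := (grd₃_le_grd₃_add_and_grd₃_add_le ha (b - 2 * a + (r - b))).1
    rw [show b - 2 * a + (r - b) + a = r - a by omega] at hA
    omega
  rcases Nat.lt_or_ge r (2 * a + b) with he | he
  · rw [grd₅_of_add_le hd, grd₅_of_le_of_lt (by omega) (by omega)]
    have := grd₃_le_self ha (r - (a + b))
    omega
  · rw [grd₅_of_add_le hd, grd₅_of_add_le (by omega)]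
    have := (grd₃_le_grd₃_add_and_grd₃_add_le ha (r - a - (a + b))).2
    rw [show r - a - (a + b) + a = r - (a + b) by omega] at this
    omega

lemma grd₅_le_grd₅_wrap_a {r : ℕ} (h1 : r < a) : grd₅ a b r ≤ grd₅ a b (2 * b - a + r) := by
  rw [grd₅_of_lt (by omega), grd₅_of_add_le (by omega), grd₃_of_lt ha h1,
    show 2 * b - a + r - (a + b) = b - 2 * a + r by omega]
  have := le_grd₃_sub_two_mul_add ha hb hsum hs₀ hH h1
  omega

lemma grd₅_le_grd₅_sub_two_a {r : ℕ} (h1 : 2 * a ≤ r) :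
    grd₅ a b r ≤ grd₅ a b (r - 2 * a) + 1 := by
  rcases Nat.lt_or_ge r b with hc | hc
  · rw [grd₅_of_lt hc, grd₅_of_lt (by omega)]
    have := grd₃_add_two_mul ha (r - 2 * a)
    rw [Nat.sub_add_cancel h1] at this
    omega
  rcases Nat.lt_or_ge r (a + b) with hd | hd
  · rw [grd₅_of_le_of_lt hc hd, grd₅_of_lt (by omega)]
    have := le_grd₃_sub_two_mul_add ha hb hsum hs₀ hH (u := r - b) (by omega)
    rw [show b - 2 * a + (r - b) = r - 2 * a by omega] at this
    omega
  rcases Nat.lt_or_ge r (2 * a + b) with he | he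
  · rw [grd₅_of_add_le hd, grd₅_of_lt (by omega), grd₃_of_lt ha (by omega)]
    have hP := le_grd₃_sub_two_mul_add ha hb hsum hs₀ hH (u := r - (a + b)) (by omega)
    have hA := (grd₃_le_grd₃_add_and_grd₃_add_le ha (b - 2 * a + (r - (a + b)))).1
    rw [show b - 2 * a + (r - (a + b)) + a = r - 2 * a by omega] at hA
    omega
  rcases Nat.lt_or_ge r (3 * a + b) with hf | hf
  · rw [grd₅_of_add_le hd, grd₅_of_le_of_lt (by omega) (by omega),
      grd₃_of_le_of_lt ha (by omega) (by omega)]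
    omega
  · rw [grd₅_of_add_le hd, grd₅_of_add_le (by omega)]
    have := grd₃_add_two_mul ha (r - 2 * a - (a + b))
    rw [show r - 2 * a - (a + b) + 2 * a = r - (a + b) by omega] at this
    omega

lemma grd₅_le_grd₅_wrap_two_a (hb' : b ≠ 3 * a) {r : ℕ} (h1 : r < 2 * a) :
    grd₅ a b r ≤ grd₅ a b (2 * b - 2 * a + r) := by
  rw [grd₅_of_lt (by omega)]
  rcases Nat.eq_zero_or_pos r with rfl | hr
  · rw [grd₃_of_lt ha ha]; exact Nat.zero_le _
  rw [grd₅_of_add_le (by omega)]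
  rcases Nat.lt_or_ge b (3 * a) with hc | hc
  · have := grd₃_succ_le ha (r - 1)
    rw [Nat.sub_add_cancel hr] at this
    rw [show 2 * b - 2 * a + r - (a + b) = r - 1 by omega]
    omega
  · have := grd₃_le_grd₃_sub_three_mul_add ha hsum hs₀ hH (by omega) h1
    rw [show 2 * b - 2 * a + r - (a + b) = b - 3 * a + r by omega]
    omega

lemma grd₅_le_grd₅_wrap_a_add_b {r : ℕ} (h1 : r < a + b) : grd₅ a b r ≤ grd₅ a b (b - a + r) := by
  rcases Nat.lt_or_ge r a with hc | hc
  · rw [grd₅_of_lt (by omega), grd₅_of_lt (by omega), grd₃_of_lt ha hc]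
    have hP := le_grd₃_sub_two_mul_add ha hb hsum hs₀ hH hc
    have hA := (grd₃_le_grd₃_add_and_grd₃_add_le ha (b - 2 * a + r)).1
    rw [show b - 2 * a + r + a = b - a + r by omega] at hA
    omega
  rcases Nat.lt_or_ge r (2 * a) with hd | hd
  · rw [grd₅_of_lt (by omega), grd₅_of_le_of_lt (by omega) (by omega),
      grd₃_of_le_of_lt ha hc hd]
    omega
  rcases Nat.lt_or_ge r b with he | he
  · rw [grd₅_of_lt he, grd₅_of_add_le (by omega),
      show b - a + r - (a + b) = r - 2 * a by omega]
    have := grd₃_add_two_mul ha (r - 2 * a)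
    rw [Nat.sub_add_cancel hd] at this
    omega
  · rw [grd₅_of_le_of_lt he h1, grd₅_of_add_le (by omega),
      show b - a + r - (a + b) = r - 2 * a by omega]
    have := le_grd₃_sub_two_mul_add ha hb hsum hs₀ hH (u := r - b) (by omega)
    rw [show b - 2 * a + (r - b) = r - 2 * a by omega] at this
    omega

end Excess

structure FamilyC (c : ℕ → ℕ) (a b : ℕ) : Prop where
  c1 : c 1 = 1
  c2 : c 2 = a
  c3 : c 3 = 2 * a
  c4 : c 4 = b
  c5 : c 5 = a + b
  c6 : c 6 = 2 * b

namespace FamilyC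

variable {c : ℕ → ℕ} {a b : ℕ} (h : FamilyC c a b)
include h

section Formulas

variable (ha : 0 < a) (hb : 2 * a ≤ b)
include ha hb

lemma coin_pos : ∀ i ∈ Icc 1 6, 0 < c i := by
  intro i hi
  rw [mem_Icc] at hi
  obtain ⟨hi1, hi6⟩ := hi
  interval_cases i <;> simp only [h.c1, h.c2, h.c3, h.c4, h.c5, h.c6] <;> omega

lemma coin_le {k : ℕ} (hk : k ≤ 6) : ∀ i ∈ Icc 1 k, c i ≤ c k := by
  intro i hi
  rw [mem_Icc] at hi
  obtain ⟨hi1, hik⟩ := hi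
  interval_cases k <;> interval_cases i <;> simp only [h.c1, h.c2, h.c3, h.c4, h.c5, h.c6] <;>
    omega

lemma grd_add_coin {k : ℕ} (hk1 : 1 ≤ k) (hk : k ≤ 6) (v : ℕ) :
    grd k c (v + c k) = grd k c v + 1 :=
  grd_add_top hk1 (h.coin_le ha hb hk) (h.coin_pos ha hb k (mem_Icc.mpr ⟨hk1, hk⟩)) v

lemma grd_eq_div_add_grd_mod_coin {k : ℕ} (hk1 : 1 ≤ k) (hk : k ≤ 6) (v : ℕ) :
    grd k c v = v / c k + grd k c (v % c k) :=
  grd_eq_div_add_grd_mod hk1 (h.coin_le ha hb hk) (h.coin_pos ha hb k (mem_Icc.mpr ⟨hk1, hk⟩)) v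

lemma grd_three (s : ℕ) : grd 3 c s = grd₃ a s := by
  rw [h.grd_eq_div_add_grd_mod_coin ha hb (k := 3) (by norm_num) (by norm_num),
    grd_succ_of_lt (by rw [h.c3]; exact Nat.mod_lt _ (by omega)),
    h.grd_eq_div_add_grd_mod_coin ha hb (k := 2) (by norm_num) (by norm_num),
    grd_succ_of_lt (by rw [h.c2]; exact Nat.mod_lt _ ha), grd_one h.c1, h.c2, h.c3,
    Nat.mod_mod_of_dvd _ (Dvd.intro_left 2 rfl), grd₃, add_assoc]

lemma grd_five_of_lt {r : ℕ} (hr : r < 2 * b) : grd 5 c r = grd₅ a b r := by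
  have grd_five_of_lt_b {s : ℕ} (hs : s < b) : grd 5 c s = grd₃ a s := by
    rw [grd_succ_of_lt (by rw [h.c5]; omega), grd_succ_of_lt (by rw [h.c4]; omega),
      h.grd_three ha hb]
  rcases Nat.lt_or_ge r b with h1 | h1
  · rw [grd₅_of_lt h1, grd_five_of_lt_b h1]
  rcases Nat.lt_or_ge r (a + b) with h2 | h2
  · obtain ⟨s, rfl⟩ : ∃ s, r = s + c 4 := ⟨r - b, by rw [h.c4]; omega⟩
    rw [h.c4] at h1 h2 ⊢
    rw [grd₅_of_le_of_lt h1 h2, grd_succ_of_lt (by rw [h.c5]; omega), ← h.c4,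
      h.grd_add_coin ha hb (by norm_num) (by norm_num), h.c4,
      grd_succ_of_lt (by rw [h.c4]; omega), h.grd_three ha hb, grd₃_of_lt ha (by omega)]
    omega
  · obtain ⟨s, rfl⟩ : ∃ s, r = s + c 5 := ⟨r - (a + b), by rw [h.c5]; omega⟩
    rw [h.c5] at h2 hr ⊢
    rw [grd₅_of_add_le h2, ← h.c5, h.grd_add_coin ha hb (by norm_num) (by norm_num),
      grd_five_of_lt_b (by omega), h.c5, Nat.add_sub_cancel]

lemma grd_six_of_lt {r : ℕ} (hr : r < 2 * b) : grd 6 c r = grd₅ a b r := by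
  rw [grd_succ_of_lt (by rw [h.c6]; exact hr), h.grd_five_of_lt ha hb hr]

lemma grd_six_add_add {s : ℕ} (hs : s < b - a) : grd 6 c (a + b + s) = grd₃ a s + 1 := by
  rw [h.grd_six_of_lt ha hb (by omega), grd₅_of_add_le (by omega), add_tsub_cancel_left]

lemma grd_six_add_two_mul (v : ℕ) : grd 6 c (v + 2 * b) = grd 6 c v + 1 := by
  rw [← h.c6, h.grd_add_coin ha hb (by norm_num) le_rfl]

/- `hstep` covers `v + d` staying in the period of `v`; `hwrap` covers `v + d` crossing a
multiple of `2b`, where greedy spends one more coin `2b`. -/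
lemma grd_six_add_le {d : ℕ} (hd : d ≤ 2 * b)
    (hstep : ∀ r, d ≤ r → r < 2 * b → grd₅ a b r ≤ grd₅ a b (r - d) + 1)
    (hwrap : ∀ r < d, grd₅ a b r ≤ grd₅ a b (2 * b - d + r)) (v : ℕ) :
    grd 6 c (v + d) ≤ grd 6 c v + 1 := by
  induction v using Nat.strong_induction_on with
  | _ v ih =>
  rcases Nat.lt_or_ge v (2 * b) with hv | hv
  · rw [h.grd_six_of_lt ha hb hv]
    rcases Nat.lt_or_ge (v + d) (2 * b) with hvd | hvd
    · rw [h.grd_six_of_lt ha hb hvd]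
      simpa using hstep (v + d) (by omega) hvd
    · obtain ⟨r, hr⟩ : ∃ r, v + d = r + 2 * b := ⟨v + d - 2 * b, by omega⟩
      rw [hr, h.grd_six_add_two_mul ha hb, h.grd_six_of_lt ha hb (by omega)]
      have := hwrap r (by omega)
      rw [show 2 * b - d + r = v by omega] at this
      omega
  · obtain ⟨u, rfl⟩ : ∃ u, v = u + 2 * b := ⟨v - 2 * b, by omega⟩
    rw [add_right_comm, h.grd_six_add_two_mul ha hb, h.grd_six_add_two_mul ha hb]
    have := ih u (by omega)
    omega

end Formulas

lemma three_le_grd_five (ha : 2 ≤ a) (hb : 3 * a - 1 ≤ b) (hb' : b ≠ 3 * a) :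
    3 ≤ grd 5 c (2 * b) := by
  have ha0 : 0 < a := by omega
  have hb2 : 2 * a ≤ b := by omega
  rw [show 2 * b = (b - a) + c 5 by rw [h.c5]; omega,
    h.grd_add_coin ha0 hb2 (k := 5) (by norm_num) (by norm_num),
    h.grd_five_of_lt ha0 hb2 (by omega), grd₅_of_lt (by omega)]
  rcases Nat.lt_or_ge b (3 * a) with hb3 | hb3
  · rw [grd₃_of_le_of_lt ha0 (by omega) (by omega)]
    omega
  · rw [show b - a = (b - 3 * a) + 2 * a by omega, grd₃_add_two_mul ha0,
      ← h.grd_three ha0 hb2 (b - 3 * a)]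
    have := grd_pos (n := 3) (c := c) (by norm_num) h.c1 (v := b - 3 * a) (by omega)
    omega

lemma not_canonical_five (ha : 2 ≤ a) (hb : 3 * a - 1 ≤ b) (hb' : b ≠ 3 * a) :
    ¬ Canonical 5 c := by
  intro hcan
  have hopt : opt 5 c (2 * b) ≤ 2 := by
    rw [show 2 * b = c 4 * 2 by rw [h.c4]; ring]
    exact opt_mul_le (by norm_num) h.c1 (by simp) 2
  have := hcan (2 * b) (by omega)
  have := h.three_le_grd_five ha hb hb'
  omega

section Canonical

variable {ℓ s₀ : ℕ} (ha : 0 < a) (hb : 3 * a - 1 ≤ b) (hb' : b ≠ 3 * a)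
  (hsum : a + b + s₀ = 2 * a * ℓ) (hs₀ : s₀ < 2 * a) (hH : grd₃ a s₀ + 1 ≤ ℓ)
include ha hb hb' hsum hs₀ hH

lemma grd_six_add_coin_le (v : ℕ) : ∀ j ∈ Icc 1 6, grd 6 c (v + c j) ≤ grd 6 c v + 1 := by
  have hb2 : 2 * a ≤ b := by omega
  intro j hj
  rw [mem_Icc] at hj
  obtain ⟨hj1, hj6⟩ := hj
  interval_cases j
  · rw [h.c1]
    refine h.grd_six_add_le ha hb2 (by omega) (fun r h1 _ => grd₅_le_grd₅_sub_one ha h1)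
      (fun r hr => ?_) v
    obtain rfl : r = 0 := by omega
    rw [grd₅_of_lt (by omega), grd₃_of_lt ha ha]
    exact Nat.zero_le _
  · rw [h.c2]
    exact h.grd_six_add_le ha hb2 (by omega)
      (fun r h1 _ => grd₅_le_grd₅_sub_a ha hb hsum hs₀ hH h1)
      (fun r hr => grd₅_le_grd₅_wrap_a ha hb hsum hs₀ hH hr) v
  · rw [h.c3]
    exact h.grd_six_add_le ha hb2 (by omega)
      (fun r h1 _ => grd₅_le_grd₅_sub_two_a ha hb hsum hs₀ hH h1)
      (fun r hr => grd₅_le_grd₅_wrap_two_a ha hb hsum hs₀ hH hb' hr) v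
  · rw [h.c4]
    refine h.grd_six_add_le ha hb2 (by omega) (fun r h1 h2 => grd₅_le_grd₅_sub_b ha h1 h2)
      (fun r hr => ?_) v
    rw [show 2 * b - b + r = b + r by omega]
    exact grd₅_le_grd₅_wrap_b ha hr
  · rw [h.c5]
    refine h.grd_six_add_le ha hb2 (by omega) (fun r h1 h2 => grd₅_le_grd₅_sub_a_add_b h1 h2)
      (fun r hr => ?_) v
    rw [show 2 * b - (a + b) + r = b - a + r by omega]
    exact grd₅_le_grd₅_wrap_a_add_b ha hb hsum hs₀ hH hr
  · rw [h.c6, h.grd_six_add_two_mul ha hb2]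

lemma canonical_six : Canonical 6 c :=
  canonical_of_grd_add_le (by norm_num) h.c1 (h.coin_pos ha (by omega))
    (h.grd_six_add_coin_le ha hb hb' hsum hs₀ hH)

end Canonical

end FamilyC

lemma exists_excess_lt {a b ℓ : ℕ} (ha : 2 ≤ a) (hb : 3 * a - 1 ≤ b) (hb' : b ≠ 3 * a)
    (hℓ : ℓ = (a + b + 2 * a - 1) / (2 * a)) :
    ∃ s₀, a + b + s₀ = 2 * a * ℓ ∧ s₀ < 2 * a ∧ s₀ < b - a := by
  have hdiv := Nat.div_add_mod (a + b + 2 * a - 1) (2 * a)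
  have hmod := Nat.mod_lt (a + b + 2 * a - 1) (show 0 < 2 * a by omega)
  rw [← hℓ] at hdiv
  refine ⟨2 * a * ℓ - (a + b), by omega, by omega, ?_⟩
  rcases Nat.lt_or_ge ℓ 3 with hℓ3 | hℓ3
  · interval_cases ℓ <;> omega
  · have := Nat.mul_le_mul_left (2 * a) hℓ3
    omega

theorem family_c_canonical_general (c : ℕ → ℕ) (c2 c4 : ℕ) (h2 : 1 < c2)
    (h4 : 3 * c2 - 1 ≤ c4) (h4' : c4 ≠ 3 * c2)
    (hc1 : c 1 = 1) (hc2 : c 2 = c2) (hc3 : c 3 = 2 * c2) (hc4 : c 4 = c4)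
    (hc5 : c 5 = c2 + c4) (hc6 : c 6 = 2 * c4)
    (ℓ : ℕ) (hℓ : ℓ = (c 5 + c 3 - 1) / c 3)
    (hgl : grd 6 c (ℓ * c 3) ≤ ℓ) :
    Canonical 6 c ∧ ¬ Canonical 5 c := by
  have h : FamilyC c c2 c4 := ⟨hc1, hc2, hc3, hc4, hc5, hc6⟩
  rw [hc5, hc3] at hℓ
  obtain ⟨s₀, hsum, hs₀, hs₀'⟩ := exists_excess_lt h2 h4 h4' hℓ
  rw [hc3, mul_comm ℓ, ← hsum, h.grd_six_add_add (by omega) (by omega) hs₀'] at hgl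
  exact ⟨h.canonical_six (by omega) h4 h4' hsum hs₀ hgl, h.not_canonical_five h2 h4 h4'⟩

theorem family_c_canonical (c : ℕ → ℕ) (c2 c4 : ℕ) (h2 : 1 < c2)
    (h4 : 3 * c2 - 1 ≤ c4) (h4' : c4 ≠ 3 * c2)
    (hc1 : c 1 = 1) (hc2 : c 2 = c2) (hc3 : c 3 = 2 * c2) (hc4 : c 4 = c4)
    (hc5 : c 5 = c2 + c4) (hc6 : c 6 = 2 * c4)
    (ℓ : ℕ) (hℓ : ℓ = (c 5 + c 3 - 1) / c 3)
    (hg : grd 6 c (ℓ * c 3) =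
      ℓ * c 3 - c 5 + 1 - ((ℓ * c 3 - c 5) / c 2) * (c 2 - 1))
    (hgl : grd 6 c (ℓ * c 3) ≤ ℓ) :
    Canonical 6 c ∧ ¬ Canonical 5 c :=
  family_c_canonical_general c c2 c4 h2 h4 h4' hc1 hc2 hc3 hc4 hc5 hc6 ℓ hℓ hgl
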